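/- Let P = ℂ[ℓ⁽⁰⁾, ℓ⁽¹⁾, …, w⁽⁰⁾, w⁽¹⁾, …] and let I ⊆ P be the ideal generated by {Dⁱ(f) : i ≥ 0} where f = (w⁽⁰⁾)² − (ℓ⁽⁰⁾)³. Then the quotient ring P/I is not reduced; that is, there exists a nonzero nilpotent element in P/I (equivalently, the radical of I is strictly larger than I). -/
import Mathlib


open MvPolynomial

noncomputable section

/-- The polynomial ring `P = ℂ[ℓ⁽⁰⁾, ℓ⁽¹⁾, …, w⁽⁰⁾, w⁽¹⁾, …]`:
variables are indexed by `Fin 2 × ℕ`, where `(0, i)` is `ℓ⁽ⁱ⁾` and `(1, i)` is `w⁽ⁱ⁾`. -/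
abbrev P : Type := MvPolynomial (Fin 2 × ℕ) ℂ

/-- The unique ℂ-linear derivation `D : P → P` with `D(ℓ⁽ⁱ⁾) = ℓ⁽ⁱ⁺¹⁾`, `D(w⁽ⁱ⁾) = w⁽ⁱ⁺¹⁾`. -/
def D : Derivation ℂ P P :=
  MvPolynomial.mkDerivation ℂ (fun p : Fin 2 × ℕ => (X (p.1, p.2 + 1) : P))

/-- `ℓ⁽ⁱ⁾` -/
def lv (i : ℕ) : P := X (0, i)

/-- `w⁽ⁱ⁾` -/
def wv (i : ℕ) : P := X (1, i)

/-- `f = (w⁽⁰⁾)² − (ℓ⁽⁰⁾)³`. -/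
def f : P := wv 0 ^ 2 - lv 0 ^ 3

/-- `f⁽ⁱ⁾ = Dⁱ(f)`. -/
def fd (i : ℕ) : P := (⇑D)^[i] f

/-- The ideal `I` generated by all `f⁽ⁱ⁾`, `i ≥ 0`. -/
def I : Ideal P := Ideal.span (Set.range fd)

/-! ### Auxiliary material -/

/-- The weight function: `wt ℓ⁽ⁱ⁾ = 2 + i`, `wt w⁽ⁱ⁾ = 3 + i`. -/
def wt : Fin 2 × ℕ → ℕ := fun v => 2 + v.1.val + v.2

lemma two_le_wt (v : Fin 2 × ℕ) : 2 ≤ wt v := by simp only [wt]; omega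

lemma two_le_weight {d : (Fin 2 × ℕ) →₀ ℕ} (hd : d ≠ 0) : 2 ≤ Finsupp.weight wt d := by
  obtain ⟨v, hv⟩ : ∃ v, d v ≠ 0 := by
    by_contra h
    push_neg at h
    exact hd (Finsupp.ext fun v => h v)
  calc 2 ≤ wt v := two_le_wt v
    _ ≤ Finsupp.weight wt d := Finsupp.le_weight_of_ne_zero' wt hv

lemma D_X (v : Fin 2 × ℕ) : D (X v) = X (v.1, v.2 + 1) := by
  rw [show (D : Derivation ℂ P P) = MvPolynomial.mkDerivation ℂ
      (fun p : Fin 2 × ℕ => (X (p.1, p.2 + 1) : P)) from rfl, mkDerivation_X]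

lemma weight_single_one (v : Fin 2 × ℕ) :
    Finsupp.weight wt (Finsupp.single v 1) = wt v := by
  simp [Finsupp.weight_apply, Finsupp.sum_single_index]

/-- `D` raises weighted degree by exactly one. -/
lemma D_homog {p : P} {n : ℕ} (hp : p.IsWeightedHomogeneous wt n) :
    (D p).IsWeightedHomogeneous wt (n + 1) := by
  rw [← mem_weightedHomogeneousSubmodule ℂ]
  have hrep : (∑ μ ∈ p.support, monomial μ (coeff μ p)) = p :=
    support_sum_monomial_coeff p
  rw [← hrep, map_sum]
  apply Submodule.sum_mem
  intro μ hμ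
  rw [show (D : Derivation ℂ P P) = MvPolynomial.mkDerivation ℂ
      (fun p : Fin 2 × ℕ => (X (p.1, p.2 + 1) : P)) from rfl,
    mkDerivation_monomial]
  apply Submodule.smul_mem
  rw [Finsupp.sum]
  apply Submodule.sum_mem
  intro v hv
  rw [mem_weightedHomogeneousSubmodule, smul_eq_mul]
  have hvne : μ v ≠ 0 := Finsupp.mem_support_iff.mp hv
  have hadd : (μ - Finsupp.single v 1) + Finsupp.single v 1 = μ := by
    ext j
    by_cases hj : j = v
    · subst hj
      simp only [Finsupp.add_apply, Finsupp.tsub_apply, Finsupp.single_eq_same]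
      omega
    · simp [Finsupp.add_apply, Finsupp.tsub_apply, Finsupp.single_apply, Ne.symm hj]
  have hwμ : Finsupp.weight wt μ = n := hp (Finsupp.mem_support_iff.mp hμ)
  have hsplit : Finsupp.weight wt (μ - Finsupp.single v 1) + wt v = n := by
    have := congrArg (Finsupp.weight wt) hadd
    rw [map_add, weight_single_one] at this
    omega
  have hX : IsWeightedHomogeneous wt (X (v.1, v.2 + 1) : P) (wt v + 1) := by
    have h := isWeightedHomogeneous_X (R := ℂ) wt (v.1, v.2 + 1)
    have : wt (v.1, v.2 + 1) = wt v + 1 := by simp [wt]; omega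
    rwa [this] at h
  have hmono : IsWeightedHomogeneous wt
      (monomial (μ - Finsupp.single v 1) ((μ v : ℂ)) : P)
      (Finsupp.weight wt (μ - Finsupp.single v 1)) :=
    isWeightedHomogeneous_monomial _ _ _ rfl
  have := hmono.mul hX
  rwa [show Finsupp.weight wt (μ - Finsupp.single v 1) + (wt v + 1) = n + 1 by omega] at this

lemma fd_zero : fd 0 = f := rfl

lemma fd_succ (i : ℕ) : fd (i + 1) = D (fd i) := by
  simp [fd, Function.iterate_succ_apply']

lemma homog_X (j : Fin 2) (i n : ℕ) (h : 2 + j.val + i = n) :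
    IsWeightedHomogeneous wt (X (j, i) : P) n := by
  have := isWeightedHomogeneous_X (R := ℂ) wt (j, i)
  rwa [show wt (j, i) = n from h] at this

lemma homog_mul {p q : P} {m n k : ℕ} (hp : IsWeightedHomogeneous wt p m)
    (hq : IsWeightedHomogeneous wt q n) (h : m + n = k) :
    IsWeightedHomogeneous wt (p * q) k := h ▸ hp.mul hq

lemma f_homog : f.IsWeightedHomogeneous wt 6 := by
  rw [← mem_weightedHomogeneousSubmodule ℂ]
  apply Submodule.sub_mem
  · rw [mem_weightedHomogeneousSubmodule, show (wv 0 ^ 2 : P) = wv 0 * wv 0 by ring]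
    exact homog_mul (homog_X 1 0 3 rfl) (homog_X 1 0 3 rfl) rfl
  · rw [mem_weightedHomogeneousSubmodule,
      show (lv 0 ^ 3 : P) = lv 0 * (lv 0 * lv 0) by ring]
    exact homog_mul (homog_X 0 0 2 rfl)
      (homog_mul (homog_X 0 0 2 rfl) (homog_X 0 0 2 rfl) rfl) rfl

lemma fd_homog (i : ℕ) : (fd i).IsWeightedHomogeneous wt (6 + i) := by
  induction i with
  | zero => exact fd_zero ▸ f_homog
  | succ n ih =>
      rw [fd_succ]
      have := D_homog ih
      rwa [show 6 + n + 1 = 6 + (n + 1) by omega] at this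

/-- Extracting a weighted homogeneous component from a product with a homogeneous factor. -/
lemma comp_mul_homog_le {q : P} {m n : ℕ} (hq : q.IsWeightedHomogeneous wt m)
    (h : m ≤ n) (p : P) :
    weightedHomogeneousComponent wt n (p * q) =
      weightedHomogeneousComponent wt (n - m) p * q := by
  ext μ
  rw [coeff_weightedHomogeneousComponent, coeff_mul, coeff_mul]
  split_ifs with hw
  · apply Finset.sum_congr rfl
    intro x hx
    rw [coeff_weightedHomogeneousComponent]
    by_cases hb : coeff x.2 q = 0
    · simp [hb]
    · have hwb : Finsupp.weight wt x.2 = m := hq hb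
      have hab : x.1 + x.2 = μ := Finset.HasAntidiagonal.mem_antidiagonal.mp hx
      have : Finsupp.weight wt x.1 + m = n := by
        rw [← hwb, ← map_add, hab, hw]
      rw [if_pos (by omega)]
  · symm
    apply Finset.sum_eq_zero
    intro x hx
    rw [coeff_weightedHomogeneousComponent]
    by_cases hb : coeff x.2 q = 0
    · simp [hb]
    · have hwb : Finsupp.weight wt x.2 = m := hq hb
      have hab : x.1 + x.2 = μ := Finset.HasAntidiagonal.mem_antidiagonal.mp hx
      rw [if_neg, zero_mul]
      intro hcon
      apply hw
      have : Finsupp.weight wt x.1 + Finsupp.weight wt x.2 = Finsupp.weight wt μ := by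
        rw [← map_add, hab]
      omega

lemma comp_mul_homog_lt {q : P} {m n : ℕ} (hq : q.IsWeightedHomogeneous wt m)
    (h : n < m) (p : P) :
    weightedHomogeneousComponent wt n (p * q) = 0 := by
  ext μ
  rw [coeff_weightedHomogeneousComponent, coeff_mul, coeff_zero]
  split_ifs with hw
  · apply Finset.sum_eq_zero
    intro x hx
    by_cases hb : coeff x.2 q = 0
    · simp [hb]
    · exfalso
      have hwb : Finsupp.weight wt x.2 = m := hq hb
      have hab : x.1 + x.2 = μ := Finset.HasAntidiagonal.mem_antidiagonal.mp hx
      have : Finsupp.weight wt x.1 + Finsupp.weight wt x.2 = Finsupp.weight wt μ := by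
        rw [← map_add, hab]
      omega
  · rfl

/-- A weighted homogeneous polynomial of weight `0` is constant. -/
lemma homog_zero_is_C {p : P} (hp : p.IsWeightedHomogeneous wt 0) :
    ∃ c : ℂ, p = C c := by
  refine ⟨coeff 0 p, ?_⟩
  ext μ
  rw [coeff_C]
  by_cases hμ : μ = 0
  · subst hμ; simp
  · rw [if_neg (Ne.symm hμ)]
    by_contra hc
    have := hp hc
    have := two_le_weight hμ
    omega

/-- The distinguished element `b = 2ℓ⁽⁰⁾w⁽¹⁾ − 3ℓ⁽¹⁾w⁽⁰⁾`. -/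
def b : P := 2 * (lv 0 * wv 1) - 3 * (lv 1 * wv 0)

lemma two_eq_C : (2 : P) = C (2 : ℂ) := (map_ofNat C 2).symm
lemma three_eq_C : (3 : P) = C (3 : ℂ) := (map_ofNat C 3).symm

lemma b_homog : b.IsWeightedHomogeneous wt 6 := by
  rw [← mem_weightedHomogeneousSubmodule ℂ, b, two_eq_C, three_eq_C]
  apply Submodule.sub_mem
  · exact homog_mul (isWeightedHomogeneous_C wt (2 : ℂ))
      (homog_mul (homog_X 0 0 2 rfl) (homog_X 1 1 4 rfl) rfl) rfl
  · exact homog_mul (isWeightedHomogeneous_C wt (3 : ℂ))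
      (homog_mul (homog_X 0 1 3 rfl) (homog_X 1 0 3 rfl) rfl) rfl

lemma fd_one : fd 1 = 2 * (wv 0 * wv 1) - 3 * (lv 0 ^ 2 * lv 1) := by
  rw [fd_succ, fd_zero, f, Derivation.map_sub, Derivation.leibniz_pow,
    Derivation.leibniz_pow]
  rw [show D (wv 0) = wv 1 from D_X (1, 0), show D (lv 0) = lv 1 from D_X (0, 0)]
  simp only [smul_eq_mul, nsmul_eq_mul]
  push_cast
  ring

def g1 : Fin 2 × ℕ → ℂ := fun v =>
  if v.1.val = 0 then (if v.2 = 0 then 1 else 0) else (if v.2 = 1 then 1 else 0)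

def g2 : Fin 2 × ℕ → ℂ := fun v =>
  if v.1.val = 0 then (if v.2 = 1 then 1 else 0) else (if v.2 = 0 then 1 else 0)

lemma g1_eval : g1 (0, 0) = 1 ∧ g1 (0, 1) = 0 ∧ g1 (1, 0) = 0 ∧ g1 (1, 1) = 1 := by
  refine ⟨?_, ?_, ?_, ?_⟩ <;> norm_num [g1]

lemma g2_eval : g2 (0, 0) = 0 ∧ g2 (0, 1) = 1 ∧ g2 (1, 0) = 1 ∧ g2 (1, 1) = 0 := by
  refine ⟨?_, ?_, ?_, ?_⟩ <;> norm_num [g2]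

lemma g1_zero : g1 0 = 1 := by show g1 (0, 0) = 1; norm_num [g1]
lemma g1_one : g1 1 = 1 := by show g1 (1, 1) = 1; norm_num [g1]
lemma g2_zero : g2 0 = 0 := by show g2 (0, 0) = 0; norm_num [g2]
lemma g2_one : g2 1 = 0 := by show g2 (1, 1) = 0; norm_num [g2]

/-- `b ∉ I`, by extracting the weight-6 homogeneous component. -/
lemma b_notMem : b ∉ I := by
  intro hb
  have key : ∀ x ∈ I, ∀ p : P,
      weightedHomogeneousComponent wt 6 (p * x) ∈
        {y : P | ∃ c : ℂ, y = C c * f} := by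
    intro x hx
    refine Submodule.span_induction ?_ ?_ ?_ ?_ hx
    · rintro _ ⟨i, rfl⟩ p
      cases i with
      | zero =>
          rw [fd_zero, comp_mul_homog_le f_homog (le_refl 6) p]
          obtain ⟨c, hc⟩ := homog_zero_is_C (p := weightedHomogeneousComponent wt (6 - 6) p)
            (weightedHomogeneousComponent_isWeightedHomogeneous (6 - 6 : ℕ) p)
          exact ⟨c, by rw [hc]⟩
      | succ n =>
          rw [comp_mul_homog_lt (fd_homog (n + 1)) (by omega) p]
          exact ⟨0, by simp⟩
    · intro p
      rw [mul_zero, map_zero]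
      exact ⟨0, by simp⟩
    · intro x y hx hy ihx ihy p
      rw [mul_add, map_add]
      obtain ⟨c1, h1⟩ := ihx p
      obtain ⟨c2, h2⟩ := ihy p
      exact ⟨c1 + c2, by rw [h1, h2, map_add]; ring⟩
    · intro a x hx ih p
      rw [smul_eq_mul, show p * (a * x) = (p * a) * x by ring]
      exact ih (p * a)
  obtain ⟨c, hc⟩ : ∃ c : ℂ, b = C c * f := by
    have h := key b hb 1
    rwa [one_mul, b_homog.weightedHomogeneousComponent_same] at h
  have e1 := congrArg (aeval g1) hc
  have e2 := congrArg (aeval g2) hc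
  rw [b, f] at e1 e2
  simp only [map_sub, map_mul, map_pow, map_ofNat, aeval_C, lv, wv, aeval_X] at e1 e2
  norm_num [g1_eval, g1_zero, g1_one] at e1
  norm_num [g2_eval, g2_zero, g2_one] at e2
  rw [← e2] at e1
  norm_num at e1

lemma b_cubed_mem : b ^ 3 ∈ I := by
  have hrep : b ^ 3 =
      (36 * (lv 0 * lv 1 ^ 2 * wv 1) - 27 * (lv 1 ^ 3 * wv 0) - 8 * wv 1 ^ 3) * fd 0
      + (-(12) * (lv 0 ^ 2 * lv 1 * wv 1) + 9 * (lv 0 * lv 1 ^ 2 * wv 0)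
          + 4 * (wv 0 * wv 1 ^ 2)) * fd 1 := by
    rw [fd_zero, fd_one, f, b]; ring
  rw [hrep]
  exact I.add_mem (Ideal.mul_mem_left _ _ (Ideal.subset_span ⟨0, rfl⟩))
    (Ideal.mul_mem_left _ _ (Ideal.subset_span ⟨1, rfl⟩))

theorem arc_space_of_cuspidal_cubic_not_reduced :
    ¬ IsReduced (P ⧸ I) ∧ I.radical ≠ I := by
  constructor
  · intro hred
    have hnil : IsNilpotent (Ideal.Quotient.mk I b) :=
      ⟨3, by rw [← map_pow, Ideal.Quotient.eq_zero_iff_mem]; exact b_cubed_mem⟩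
    have h0 := hnil.eq_zero
    exact b_notMem (Ideal.Quotient.eq_zero_iff_mem.mp h0)
  · intro h
    have : b ∈ I.radical := Ideal.mem_radical_iff.mpr ⟨3, b_cubed_mem⟩
    rw [h] at this
    exact b_notMem this
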